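/- (Corollary 3.6, Reduction to the Hamming graph.) For every integer ℓ ≥ 2, every n ≥ 1, and every connected n-dimensional product graph G of side-length ℓ, one has ℰ^IP_{𝒦_ℓ^n}(f) ≤ ℓ³ · ℰ^IP_G(f) for every f : 𝔖(V) → ℝ, where 𝒦_ℓ^n is the Hamming graph, i.e. the n-fold cartesian product of complete graphs on {1,…,ℓ}, which has the same vertex set V = {1,…,ℓ}^n as G. -/

import Mathlib

open Finset

open scoped Classical in
/-- The Dirichlet form of the interchange process on `G`. -/
noncomputable def ipForm {V : Type} [Fintype V] [DecidableEq V]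
    (G : SimpleGraph V) (f : Equiv.Perm V → ℝ) : ℝ :=
  (1 / (4 * (Nat.factorial (Fintype.card V) : ℝ))) *
    ∑ σ : Equiv.Perm V, ∑ x : V, ∑ y : V,
      (if G.Adj x y then (f (σ * Equiv.swap x y) - f σ) ^ 2 else 0)

def prodGraph {ℓ n : ℕ} (Gs : Fin n → SimpleGraph (Fin ℓ)) :
    SimpleGraph (Fin n → Fin ℓ) where
  Adj x y := ∃ i, (Gs i).Adj (x i) (y i) ∧ ∀ j, j ≠ i → x j = y j
  symm := by
    constructor
    rintro x y ⟨i, h, hj⟩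
    exact ⟨i, (Gs i).adj_symm h, fun j hj' => (hj j hj').symm⟩
  loopless := by
    constructor
    rintro x ⟨i, h, -⟩
    exact (Gs i).irrefl h

/-- The Hamming graph: the `n`-fold cartesian product of complete graphs on `ℓ` vertices. -/
def hammingGraph (ℓ n : ℕ) : SimpleGraph (Fin n → Fin ℓ) :=
  prodGraph (fun _ => (⊤ : SimpleGraph (Fin ℓ)))

set_option linter.unusedSectionVars false


open scoped Classical in
noncomputable def Dform {V : Type} [Fintype V] [DecidableEq V]
    (f : Equiv.Perm V → ℝ) (τ : Equiv.Perm V) : ℝ :=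
  ∑ σ : Equiv.Perm V, (f (σ * τ) - f σ) ^ 2

section Dlemmas
variable {V : Type} [Fintype V] [DecidableEq V] (f : Equiv.Perm V → ℝ)

lemma Dform_nonneg (τ : Equiv.Perm V) : 0 ≤ Dform f τ :=
  Finset.sum_nonneg fun _ _ => sq_nonneg _

lemma Dform_one : Dform f 1 = 0 := by simp [Dform]

lemma Dform_swap_comm (u v : V) :
    Dform f (Equiv.swap u v) = Dform f (Equiv.swap v u) := by rw [Equiv.swap_comm]

lemma Dform_shift (g τ : Equiv.Perm V) :
    ∑ σ : Equiv.Perm V, (f (σ * g * τ) - f (σ * g)) ^ 2 = Dform f τ := by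
  rw [Dform]
  exact Equiv.sum_comp (Equiv.mulRight g) (fun σ => (f (σ * τ) - f σ) ^ 2)

lemma sqrt_Dform_mul (g h : Equiv.Perm V) :
    Real.sqrt (Dform f (g * h)) ≤ Real.sqrt (Dform f g) + Real.sqrt (Dform f h) := by
  have h1 : Dform f (g * h) ≤ (Real.sqrt (Dform f g) + Real.sqrt (Dform f h)) ^ 2 := by
    have expand : Dform f (g * h) =
        (∑ σ : Equiv.Perm V, (f (σ * g * h) - f (σ * g)) ^ 2)
        + 2 * (∑ σ : Equiv.Perm V, (f (σ * g * h) - f (σ * g)) * (f (σ * g) - f σ))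
        + ∑ σ : Equiv.Perm V, (f (σ * g) - f σ) ^ 2 := by
      have hterm : ∀ σ : Equiv.Perm V, (f (σ * (g * h)) - f σ) ^ 2 =
          (f (σ * g * h) - f (σ * g)) ^ 2
          + 2 * ((f (σ * g * h) - f (σ * g)) * (f (σ * g) - f σ))
          + (f (σ * g) - f σ) ^ 2 := fun σ => by rw [← mul_assoc]; ring
      rw [Dform]
      simp_rw [hterm, Finset.sum_add_distrib, Finset.mul_sum]
    have cs : (∑ σ : Equiv.Perm V, (f (σ * g * h) - f (σ * g)) * (f (σ * g) - f σ))
        ≤ Real.sqrt (Dform f h) * Real.sqrt (Dform f g) := by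
      have := Finset.sum_mul_sq_le_sq_mul_sq Finset.univ
        (fun σ : Equiv.Perm V => f (σ * g * h) - f (σ * g))
        (fun σ : Equiv.Perm V => f (σ * g) - f σ)
      have h2 : (∑ σ : Equiv.Perm V, (f (σ * g * h) - f (σ * g)) * (f (σ * g) - f σ)) ^ 2
          ≤ Dform f h * Dform f g := by
        rw [← Dform_shift f g h] at *
        calc _ ≤ _ := this
        _ = _ := by rw [Dform]
      calc (∑ σ : Equiv.Perm V, (f (σ * g * h) - f (σ * g)) * (f (σ * g) - f σ))
          ≤ |∑ σ : Equiv.Perm V, (f (σ * g * h) - f (σ * g)) * (f (σ * g) - f σ)| := le_abs_self _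
        _ = Real.sqrt ((∑ σ : Equiv.Perm V, (f (σ * g * h) - f (σ * g)) * (f (σ * g) - f σ)) ^ 2) := by
            rw [Real.sqrt_sq_eq_abs]
        _ ≤ Real.sqrt (Dform f h * Dform f g) := Real.sqrt_le_sqrt h2
        _ = Real.sqrt (Dform f h) * Real.sqrt (Dform f g) := Real.sqrt_mul (Dform_nonneg f h) _
    rw [expand, Dform_shift f g h, add_sq,
      Real.sq_sqrt (Dform_nonneg f g), Real.sq_sqrt (Dform_nonneg f h)]
    have hBg : (∑ σ : Equiv.Perm V, (f (σ * g) - f σ) ^ 2) = Dform f g := rfl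
    rw [hBg]
    have hcomm : Real.sqrt (Dform f g) * Real.sqrt (Dform f h)
        = Real.sqrt (Dform f h) * Real.sqrt (Dform f g) := mul_comm _ _
    linarith [cs]
  calc Real.sqrt (Dform f (g * h)) ≤ Real.sqrt ((Real.sqrt (Dform f g) + Real.sqrt (Dform f h)) ^ 2) :=
        Real.sqrt_le_sqrt h1
    _ = |Real.sqrt (Dform f g) + Real.sqrt (Dform f h)| := Real.sqrt_sq_eq_abs _
    _ = _ := abs_of_nonneg (by positivity)

lemma sqrt_Dform_prod : ∀ L : List (Equiv.Perm V),
    Real.sqrt (Dform f L.prod) ≤ (L.map fun τ => Real.sqrt (Dform f τ)).sum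
  | [] => by simp [Dform_one]
  | τ :: L => by
      rw [List.prod_cons, List.map_cons, List.sum_cons]
      calc Real.sqrt (Dform f (τ * L.prod))
          ≤ Real.sqrt (Dform f τ) + Real.sqrt (Dform f L.prod) := sqrt_Dform_mul f τ L.prod
        _ ≤ _ := by have := sqrt_Dform_prod L; linarith

lemma list_sq_sum_le (L : List ℝ) : L.sum ^ 2 ≤ (L.length : ℝ) * (L.map (· ^ 2)).sum := by
  have h1 : L.sum = ∑ i : Fin L.length, L.get i := by
    conv_lhs => rw [← List.ofFn_get L]
    rw [List.sum_ofFn]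
  have h2 : (L.map (· ^ 2)).sum = ∑ i : Fin L.length, (L.get i) ^ 2 := by
    conv_lhs => rw [← List.ofFn_get L, List.map_ofFn]
    rw [List.sum_ofFn]
    simp [Function.comp]
  rw [h1, h2]
  have := Finset.sum_mul_sq_le_sq_mul_sq Finset.univ (fun _ : Fin L.length => (1:ℝ))
    (fun i => L.get i)
  simpa [Finset.card_univ] using this

lemma Dform_prod_le (L : List (Equiv.Perm V)) :
    Dform f L.prod ≤ (L.length : ℝ) * (L.map (Dform f)).sum := by
  have h0 : Dform f L.prod = Real.sqrt (Dform f L.prod) ^ 2 :=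
    (Real.sq_sqrt (Dform_nonneg f _)).symm
  rw [h0]
  calc Real.sqrt (Dform f L.prod) ^ 2
      ≤ ((L.map fun τ => Real.sqrt (Dform f τ)).sum) ^ 2 := by
        have := sqrt_Dform_prod f L
        have hnn : (0:ℝ) ≤ Real.sqrt (Dform f L.prod) := Real.sqrt_nonneg _
        nlinarith
    _ ≤ ((L.map fun τ => Real.sqrt (Dform f τ)).length : ℝ) *
          ((L.map fun τ => Real.sqrt (Dform f τ)).map (· ^ 2)).sum := list_sq_sum_le _
    _ = (L.length : ℝ) * (L.map (Dform f)).sum := by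
        rw [List.length_map, List.map_map]
        congr 1
        refine congrArg List.sum (List.map_congr_left fun τ _ => ?_)
        exact Real.sq_sqrt (Dform_nonneg f τ)

end Dlemmas
section Word
variable {V : Type} [Fintype V] [DecidableEq V]
variable {A : Type} [Fintype A] [DecidableEq A] {H : SimpleGraph A}

/-- palindrome word of swaps (of images under `φ`) realizing `swap (φ a) (φ b)` along a path. -/
noncomputable def word (φ : A → V) : ∀ {a b : A}, H.Walk a b → List (Equiv.Perm V)
  | _, _, .nil => []
  | a, _, .cons (v := c) _ q =>
      Equiv.swap (φ a) (φ c) ::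
        (word φ q ++ if q.length = 0 then [] else [Equiv.swap (φ a) (φ c)])

lemma word_prod (φ : A → V) (hφ : Function.Injective φ) :
    ∀ {a b : A} (p : H.Walk a b), p.IsPath → a ≠ b →
      (word φ p).prod = Equiv.swap (φ a) (φ b) := by
  intro a b p
  induction p with
  | nil => intro _ hab; exact absurd rfl hab
  | @cons a c b h q ih =>
    intro hp hab
    by_cases hq : q.length = 0
    · have hcb : c = b := SimpleGraph.Walk.eq_of_length_eq_zero hq
      subst hcb
      have hqnil : q = SimpleGraph.Walk.nil :=
        SimpleGraph.Walk.isPath_iff_eq_nil.mp hp.of_cons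
      subst hqnil
      simp [word]
    · have hcb : c ≠ b := by
        intro hcb
        subst hcb
        exact hq (by rw [SimpleGraph.Walk.isPath_iff_eq_nil.mp hp.of_cons]; rfl)
      have hprod := ih hp.of_cons hcb
      rw [word]
      simp only [hq, if_false]
      rw [List.prod_cons, List.prod_append, hprod, List.prod_singleton]
      have hbc : φ b ≠ φ c := fun e => hcb (hφ e).symm
      have hba : φ b ≠ φ a := fun e => hab (hφ e).symm
      rw [Equiv.swap_comm (φ a) (φ c), Equiv.swap_comm (φ c) (φ b), ← mul_assoc]
      exact Equiv.swap_mul_swap_mul_swap hbc hba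

lemma word_length (φ : A → V) :
    ∀ {a b : A} (p : H.Walk a b), (word φ p).length ≤ 2 * p.length := by
  intro a b p
  induction p with
  | nil => simp [word]
  | @cons a c b h q ih =>
    rw [word]
    simp only [List.length_cons, List.length_append, SimpleGraph.Walk.length_cons]
    have : (if q.length = 0 then ([] : List (Equiv.Perm V))
        else [Equiv.swap (φ a) (φ c)]).length ≤ 1 := by
      split <;> simp
    omega

open scoped Classical in
lemma word_congestion (φ : A → V) (f : Equiv.Perm V → ℝ) :
    ∀ {a b : A} (p : H.Walk a b), p.IsPath →
      ((word φ p).map (Dform f)).sum ≤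
        ∑ u : A, ∑ v : A,
          (if s(u, v) ∈ p.edges then Dform f (Equiv.swap (φ u) (φ v)) else 0) := by
  intro a b p
  induction p with
  | nil => simp [word]
  | @cons a c b h q ih =>
    intro hp
    have hanotin : a ∉ q.support := by
      have := hp.support_nodup
      simp only [SimpleGraph.Walk.support_cons, List.nodup_cons] at this
      exact this.1
    have hedge_notin : s(a, c) ∉ q.edges := fun hmem =>
      hanotin (q.fst_mem_support_of_mem_edges hmem)
    have hsplit : ∀ u v : A,
        (if s(u, v) ∈ (SimpleGraph.Walk.cons h q).edges
          then Dform f (Equiv.swap (φ u) (φ v)) else 0)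
        = (if s(u, v) = s(a, c) then Dform f (Equiv.swap (φ u) (φ v)) else 0)
          + (if s(u, v) ∈ q.edges then Dform f (Equiv.swap (φ u) (φ v)) else 0) := by
      intro u v
      simp only [SimpleGraph.Walk.edges_cons, List.mem_cons]
      by_cases h1 : s(u, v) = s(a, c)
      · have h2 : s(u, v) ∉ q.edges := by rw [h1]; exact hedge_notin
        simp [h1, h2, hedge_notin]
      · simp [h1]
    have hpair : ∑ u : A, ∑ v : A,
        (if s(u, v) = s(a, c) then Dform f (Equiv.swap (φ u) (φ v)) else 0)
        = 2 * Dform f (Equiv.swap (φ a) (φ c)) := by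
      have hac : a ≠ c := h.ne
      have hcond : ∀ u v : A, (s(u, v) = s(a, c)) ↔ ((u = a ∧ v = c) ∨ (u = c ∧ v = a)) := by
        intro u v; exact Sym2.eq_iff
      simp_rw [hcond]
      have hsplit2 : ∀ u v : A,
          (if (u = a ∧ v = c) ∨ (u = c ∧ v = a)
            then Dform f (Equiv.swap (φ u) (φ v)) else 0)
          = (if u = a ∧ v = c then Dform f (Equiv.swap (φ u) (φ v)) else 0)
            + (if u = c ∧ v = a then Dform f (Equiv.swap (φ u) (φ v)) else 0) := by
        intro u v
        by_cases h1 : u = a ∧ v = c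
        · obtain ⟨rfl, rfl⟩ := h1
          have h2 : ¬(u = v ∧ v = u) := fun hh => hac hh.1
          rw [if_pos (Or.inl ⟨rfl, rfl⟩), if_pos ⟨rfl, rfl⟩, if_neg h2, add_zero]
        · by_cases h2 : u = c ∧ v = a
          · obtain ⟨rfl, rfl⟩ := h2
            rw [if_pos (Or.inr ⟨rfl, rfl⟩), if_neg h1, if_pos ⟨rfl, rfl⟩, zero_add]
          · rw [if_neg (by tauto), if_neg h1, if_neg h2, add_zero]
      simp_rw [hsplit2, Finset.sum_add_distrib]
      rw [show ∀ X : A → A → ℝ, ∑ u : A, ∑ v : A, (if u = a ∧ v = c then X u v else 0) = X a c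
        from ?_, show ∀ X : A → A → ℝ, ∑ u : A, ∑ v : A, (if u = c ∧ v = a then X u v else 0) = X c a
        from ?_]
      · rw [Dform_swap_comm f (φ c) (φ a)]; ring
      · intro X
        simp_rw [ite_and]
        rw [Finset.sum_eq_single c]
        · rw [Finset.sum_eq_single a] <;> simp +contextual
        · intro u _ hu; simp [hu]
        · simp
      · intro X
        simp_rw [ite_and]
        rw [Finset.sum_eq_single a]
        · rw [Finset.sum_eq_single c] <;> simp +contextual
        · intro u _ hu; simp [hu]
        · simp
    simp_rw [hsplit, Finset.sum_add_distrib, hpair]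
    rw [word]
    simp only [List.map_cons, List.map_append, List.sum_cons, List.sum_append]
    have hlast : ((if q.length = 0 then ([] : List (Equiv.Perm V))
        else [Equiv.swap (φ a) (φ c)]).map (Dform f)).sum
        ≤ Dform f (Equiv.swap (φ a) (φ c)) := by
      split
      · simpa using Dform_nonneg f _
      · simp
    have := ih hp.of_cons
    linarith
end Word

section DistSum
variable {A : Type} [Fintype A] [DecidableEq A] {H : SimpleGraph A}

open scoped Classical

lemma exists_crossing {S : Finset A} :
    ∀ {x y : A}, H.Walk x y → x ∈ S → y ∉ S → ∃ u v, H.Adj u v ∧ u ∈ S ∧ v ∉ S := by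
  intro x y w
  induction w with
  | nil => intro hx hy; exact absurd hx hy
  | @cons x c y h q ih =>
    intro hx hy
    by_cases hc : c ∈ S
    · exact ih hc hy
    · exact ⟨x, c, h, hx, hc⟩

lemma ball_card_ge (hH : H.Connected) (a : A) :
    ∀ k : ℕ, min (k + 1) (Fintype.card A) ≤ (univ.filter fun b => H.dist a b ≤ k).card := by
  intro k
  induction k with
  | zero =>
    have ha : a ∈ univ.filter fun b => H.dist a b ≤ 0 := by
      simp [SimpleGraph.dist_self]
    exact le_trans (min_le_left _ _) (Finset.card_pos.mpr ⟨a, ha⟩)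
  | succ k ih =>
    have hmono : (univ.filter fun b => H.dist a b ≤ k)
        ⊆ (univ.filter fun b => H.dist a b ≤ k + 1) := by
      intro b hb; simp only [Finset.mem_filter, Finset.mem_univ, true_and] at hb ⊢; omega
    by_cases hU : (univ.filter fun b => H.dist a b ≤ k) = univ
    · rw [hU] at hmono
      refine le_trans (min_le_right _ _) ?_
      rw [← Finset.card_univ (α := A)]
      exact Finset.card_le_card hmono
    · obtain ⟨b, hb⟩ : ∃ b, b ∉ (univ.filter fun b => H.dist a b ≤ k) := by
        by_contra hcon; push_neg at hcon
        exact hU (Finset.eq_univ_iff_forall.mpr hcon)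
      obtain ⟨w⟩ := hH.preconnected a b
      obtain ⟨u, v, huv, hu, hv⟩ := exists_crossing w (by simp [SimpleGraph.dist_self]) hb
      have hu' : H.dist a u ≤ k := by
        simpa only [Finset.mem_filter, Finset.mem_univ, true_and] using hu
      have hv' : ¬ H.dist a v ≤ k := by
        simpa only [Finset.mem_filter, Finset.mem_univ, true_and] using hv
      have hdistv : H.dist a v ≤ k + 1 := by
        have ht := hH.dist_triangle (u := a) (v := u) (w := v)
        have h1 : H.dist u v = 1 := SimpleGraph.dist_eq_one_iff_adj.mpr huv
        omega
      have hins : insert v (univ.filter fun b => H.dist a b ≤ k)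
          ⊆ (univ.filter fun b => H.dist a b ≤ k + 1) := by
        intro x hx
        rcases Finset.mem_insert.mp hx with rfl | hx
        · simp only [Finset.mem_filter, Finset.mem_univ, true_and]; exact hdistv
        · exact hmono hx
      have hcard := Finset.card_le_card hins
      rw [Finset.card_insert_of_notMem
        (by simp only [Finset.mem_filter, Finset.mem_univ, true_and]; exact hv')] at hcard
      have hk1 : k + 1 ≤ (univ.filter fun b => H.dist a b ≤ k).card := by
        rcases le_or_gt (Fintype.card A) (k + 1) with hmin | hmin
        · have hle : (univ.filter fun b => H.dist a b ≤ k).card ≤ Fintype.card A :=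
            Finset.card_le_univ _
          have : min (k + 1) (Fintype.card A) = Fintype.card A := by omega
          rw [this] at ih
          exact absurd (Finset.eq_univ_of_card _ (le_antisymm hle ih)) hU
        · have : min (k + 1) (Fintype.card A) = k + 1 := by omega
          rw [this] at ih; exact ih
      have := min_le_left (k + 1 + 1) (Fintype.card A)
      omega

lemma dist_le_card (hH : H.Connected) (a b : A) :
    H.dist a b ≤ Fintype.card A - 1 := by
  have hL : 1 ≤ Fintype.card A := Fintype.card_pos_iff.mpr ⟨a⟩
  have h := ball_card_ge hH a (Fintype.card A - 1)
  have hmin : min (Fintype.card A - 1 + 1) (Fintype.card A) = Fintype.card A := by omega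
  rw [hmin] at h
  have heq : (univ.filter fun b => H.dist a b ≤ Fintype.card A - 1) = univ :=
    Finset.eq_univ_of_card _ (le_antisymm (Finset.card_le_univ _) h)
  have hb : b ∈ univ.filter fun b => H.dist a b ≤ Fintype.card A - 1 := by
    rw [heq]; exact Finset.mem_univ b
  simpa only [Finset.mem_filter, Finset.mem_univ, true_and] using hb

lemma double_dist_sum_le (hH : H.Connected) (a : A) :
    2 * ∑ b : A, H.dist a b ≤ Fintype.card A * (Fintype.card A - 1) := by
  set L := Fintype.card A with hLdef
  have hL : 1 ≤ L := Fintype.card_pos_iff.mpr ⟨a⟩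
  have hdist : ∀ b, H.dist a b = ((range (L - 1)).filter fun k => k < H.dist a b).card := by
    intro b
    have hd : H.dist a b ≤ L - 1 := dist_le_card hH a b
    have hfil : ((range (L - 1)).filter fun k => k < H.dist a b) = range (H.dist a b) := by
      ext k
      simp only [Finset.mem_filter, Finset.mem_range]
      omega
    rw [hfil, Finset.card_range]
  have step1 : ∑ b : A, H.dist a b
      = ∑ k ∈ range (L - 1), (univ.filter fun b => k < H.dist a b).card := by
    have step1a : ∑ b : A, H.dist a b
        = ∑ b : A, ((range (L - 1)).filter fun k => k < H.dist a b).card :=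
      Finset.sum_congr rfl fun b _ => hdist b
    rw [step1a]
    simp_rw [Finset.card_filter]
    rw [Finset.sum_comm]
  have step2 : ∀ k, k ∈ range (L - 1) →
      (univ.filter fun b => k < H.dist a b).card ≤ L - 1 - k := by
    intro k hk
    rw [Finset.mem_range] at hk
    have hball := ball_card_ge hH a k
    have hmin : min (k + 1) L = k + 1 := by omega
    rw [hmin] at hball
    have hcompl : (univ.filter fun b => k < H.dist a b)
        = univ \ (univ.filter fun b => H.dist a b ≤ k) := by
      ext b
      simp only [Finset.mem_filter, Finset.mem_univ, true_and, Finset.mem_sdiff]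
      omega
    rw [hcompl, Finset.card_sdiff_of_subset (Finset.filter_subset _ _), Finset.card_univ]
    omega
  have step3 : ∑ b : A, H.dist a b ≤ ∑ k ∈ range (L - 1), (L - 1 - k) := by
    rw [step1]; exact Finset.sum_le_sum step2
  have gauss : 2 * ∑ k ∈ range (L - 1), (L - 1 - k) = L * (L - 1) := by
    set m := L - 1 with hm
    have hrefl := Finset.sum_range_reflect (fun j => j + 1) m
    have hcongr : ∑ j ∈ range m, (m - 1 - j + 1) = ∑ k ∈ range m, (m - k) := by
      refine Finset.sum_congr rfl fun j hj => ?_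
      rw [Finset.mem_range] at hj
      omega
    have hgauss := Finset.sum_range_id_mul_two m
    have hsum1 : ∑ j ∈ range m, (j + 1) = (∑ j ∈ range m, j) + m := by
      rw [Finset.sum_add_distrib, Finset.sum_const, Finset.card_range, smul_eq_mul, mul_one]
    have hkey : ∑ k ∈ range m, (m - k) = (∑ j ∈ range m, j) + m := by
      rw [← hsum1, ← hrefl, hcongr]
    have hm1 : m + 1 = L := by omega
    calc 2 * ∑ k ∈ range m, (m - k) = (∑ j ∈ range m, j) * 2 + 2 * m := by rw [hkey]; ring
      _ = m * (m - 1) + 2 * m := by rw [hgauss]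
      _ = m * (m + 1) := by
          cases m with
          | zero => simp
          | succ t => simp only [Nat.succ_sub_one]; ring
      _ = L * (L - 1) := by rw [hm1]; exact mul_comm m L
  omega

end DistSum

open scoped Classical in
lemma oneDim {V : Type} [Fintype V] [DecidableEq V]
    {A : Type} [Fintype A] [DecidableEq A] (H : SimpleGraph A) (hH : H.Connected)
    (φ : A → V) (hφ : Function.Injective φ) (f : Equiv.Perm V → ℝ) :
    ∑ a : A, ∑ b : A, (if a ≠ b then Dform f (Equiv.swap (φ a) (φ b)) else 0)
      ≤ (Fintype.card A : ℝ) ^ 3 *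
        ∑ a : A, ∑ b : A, (if H.Adj a b then Dform f (Equiv.swap (φ a) (φ b)) else 0) := by
  set R := ∑ a : A, ∑ b : A, (if H.Adj a b then Dform f (Equiv.swap (φ a) (φ b)) else 0) with hR
  have hRnn : 0 ≤ R := by
    refine Finset.sum_nonneg fun a _ => Finset.sum_nonneg fun b _ => ?_
    split
    · exact Dform_nonneg f _
    · exact le_refl 0
  have key : ∀ a b : A, a ≠ b →
      Dform f (Equiv.swap (φ a) (φ b)) ≤ 2 * (H.dist a b : ℝ) * R := by
    intro a b hab
    obtain ⟨p, hplen⟩ := hH.exists_walk_length_eq_dist a b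
    have hppath : p.IsPath := p.isPath_of_length_eq_dist hplen
    rw [← word_prod φ hφ p hppath hab]
    calc Dform f ((word φ p).prod)
        ≤ ((word φ p).length : ℝ) * ((word φ p).map (Dform f)).sum := Dform_prod_le f _
      _ ≤ 2 * (H.dist a b : ℝ) * R := by
          have hlen : ((word φ p).length : ℝ) ≤ 2 * (H.dist a b : ℝ) := by
            have h2 := word_length φ p
            rw [hplen] at h2
            exact_mod_cast h2
          have hcong := word_congestion φ f p hppath
          have hmono : (∑ u : A, ∑ v : A,
              (if s(u,v) ∈ p.edges then Dform f (Equiv.swap (φ u) (φ v)) else 0)) ≤ R := by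
            rw [hR]
            refine Finset.sum_le_sum fun u _ => Finset.sum_le_sum fun v _ => ?_
            by_cases hm : s(u,v) ∈ p.edges
            · rw [if_pos hm, if_pos (p.adj_of_mem_edges hm)]
            · rw [if_neg hm]
              split
              · exact Dform_nonneg f _
              · exact le_refl 0
          have hsumnn : 0 ≤ ((word φ p).map (Dform f)).sum := by
            refine List.sum_nonneg fun x hx => ?_
            obtain ⟨τ, _, rfl⟩ := List.mem_map.mp hx
            exact Dform_nonneg f τ
          calc ((word φ p).length : ℝ) * ((word φ p).map (Dform f)).sum
              ≤ (2 * (H.dist a b : ℝ)) * ((word φ p).map (Dform f)).sum :=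
                mul_le_mul_of_nonneg_right hlen hsumnn
            _ ≤ 2 * (H.dist a b : ℝ) * R :=
                mul_le_mul_of_nonneg_left (le_trans hcong hmono) (by positivity)
  calc ∑ a : A, ∑ b : A, (if a ≠ b then Dform f (Equiv.swap (φ a) (φ b)) else 0)
      ≤ ∑ a : A, ∑ b : A, 2 * (H.dist a b : ℝ) * R := by
        refine Finset.sum_le_sum fun a _ => Finset.sum_le_sum fun b _ => ?_
        split_ifs with hab
        · exact key a b hab
        · positivity
    _ = (∑ a : A, ∑ b : A, 2 * (H.dist a b : ℝ)) * R := by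
        rw [Finset.sum_mul]
        exact Finset.sum_congr rfl fun a _ => by rw [Finset.sum_mul]
    _ ≤ (Fintype.card A : ℝ) ^ 3 * R := by
        refine mul_le_mul_of_nonneg_right ?_ hRnn
        have hnat : ∑ a : A, 2 * (∑ b : A, H.dist a b)
            ≤ Fintype.card A * (Fintype.card A * (Fintype.card A - 1)) := by
          calc ∑ a : A, 2 * (∑ b : A, H.dist a b)
              ≤ ∑ _a : A, Fintype.card A * (Fintype.card A - 1) :=
                Finset.sum_le_sum fun a _ => double_dist_sum_le hH a
            _ = Fintype.card A * (Fintype.card A * (Fintype.card A - 1)) := by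
                rw [Finset.sum_const, Finset.card_univ, smul_eq_mul]
        have hnat2 : ∑ a : A, 2 * (∑ b : A, H.dist a b) ≤ Fintype.card A ^ 3 := by
          refine le_trans hnat ?_
          have h1 : Fintype.card A - 1 ≤ Fintype.card A := Nat.sub_le _ _
          calc Fintype.card A * (Fintype.card A * (Fintype.card A - 1))
              ≤ Fintype.card A * (Fintype.card A * Fintype.card A) :=
                Nat.mul_le_mul_left _ (Nat.mul_le_mul_left _ h1)
            _ = Fintype.card A ^ 3 := by ring
        have hcast : (∑ a : A, ∑ b : A, 2 * (H.dist a b : ℝ))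
            = ((∑ a : A, 2 * (∑ b : A, H.dist a b) : ℕ) : ℝ) := by
          push_cast [Finset.mul_sum]
          rfl
        rw [hcast]
        exact_mod_cast hnat2
section Main

lemma prodGraph_adj {ℓ n : ℕ} (Gs : Fin n → SimpleGraph (Fin ℓ)) (x y : Fin n → Fin ℓ) :
    (prodGraph Gs).Adj x y ↔ ∃ i, (Gs i).Adj (x i) (y i) ∧ ∀ j, j ≠ i → x j = y j :=
  Iff.rfl

lemma factor_connected {ℓ n : ℕ} (Gs : Fin n → SimpleGraph (Fin ℓ))
    (hconn : (prodGraph Gs).Connected) (i : Fin n) : (Gs i).Connected := by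
  have hne : Nonempty (Fin ℓ) := by
    obtain ⟨x⟩ := hconn.nonempty
    exact ⟨x i⟩
  rw [SimpleGraph.connected_iff]
  refine ⟨?_, hne⟩
  have hproj : ∀ x y : Fin n → Fin ℓ,
      (prodGraph Gs).Walk x y → (Gs i).Reachable (x i) (y i) := by
    intro x y w
    induction w with
    | nil => exact SimpleGraph.Reachable.refl _
    | @cons x c y h q ih =>
      obtain ⟨j, hadj, hoff⟩ := h
      by_cases hji : j = i
      · subst hji
        exact SimpleGraph.Reachable.trans hadj.reachable ih
      · have hxi : x i = c i := hoff i fun hh => hji hh.symm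
        rw [hxi]
        exact ih
  intro a b
  have hr := hproj (fun _ => a) (Function.update (fun _ => a) i b)
    ((hconn.preconnected _ _).some
      )
  simpa [Function.update_self] using hr

/-- the embedding of `Fin ℓ` into `Fin n → Fin ℓ` in coordinate `i` with off-profile `z`. -/
noncomputable def emb {ℓ n : ℕ} (i : Fin n) (z : {j : Fin n // j ≠ i} → Fin ℓ)
    (a : Fin ℓ) : Fin n → Fin ℓ :=
  (Equiv.funSplitAt i (Fin ℓ)).symm (a, z)

lemma emb_inj {ℓ n : ℕ} (i : Fin n) (z : {j : Fin n // j ≠ i} → Fin ℓ) :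
    Function.Injective (emb i z) := by
  intro a a' h
  have h2 := (Equiv.funSplitAt i (Fin ℓ)).symm.injective h
  exact (Prod.mk.injEq _ _ _ _).mp h2 |>.1

lemma emb_apply_same {ℓ n : ℕ} (i : Fin n) (z : {j : Fin n // j ≠ i} → Fin ℓ) (a : Fin ℓ) :
    emb i z a i = a := by
  simp [emb]

lemma emb_apply_ne {ℓ n : ℕ} (i : Fin n) (z : {j : Fin n // j ≠ i} → Fin ℓ) (a : Fin ℓ)
    {j : Fin n} (hj : j ≠ i) : emb i z a j = z ⟨j, hj⟩ := by
  simp [emb, hj]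

open scoped Classical in
lemma decomp {ℓ n : ℕ} (Hs : Fin n → SimpleGraph (Fin ℓ))
    (F : (Fin n → Fin ℓ) → (Fin n → Fin ℓ) → ℝ) :
    ∑ x : Fin n → Fin ℓ, ∑ y : Fin n → Fin ℓ, (if (prodGraph Hs).Adj x y then F x y else 0)
    = ∑ i : Fin n, ∑ z : {j : Fin n // j ≠ i} → Fin ℓ, ∑ a : Fin ℓ, ∑ b : Fin ℓ,
        (if (Hs i).Adj a b then F (emb i z a) (emb i z b) else 0) := by
  have step1 : ∀ x y : Fin n → Fin ℓ,
      (if (prodGraph Hs).Adj x y then F x y else 0)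
      = ∑ i : Fin n,
          (if ((Hs i).Adj (x i) (y i) ∧ ∀ j, j ≠ i → x j = y j) then F x y else 0) := by
    intro x y
    by_cases h : (prodGraph Hs).Adj x y
    · obtain ⟨i, hi⟩ := (prodGraph_adj Hs x y).mp h
      rw [if_pos h, Finset.sum_eq_single i]
      · rw [if_pos hi]
      · intro j _ hji
        rw [if_neg]
        rintro ⟨hadj, hoff⟩
        exact hi.1.ne (hoff i hji.symm ▸ rfl)
      · intro hmem; exact absurd (Finset.mem_univ i) hmem
    · rw [if_neg h, eq_comm]
      exact Finset.sum_eq_zero fun i _ =>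
        if_neg fun hc => h ((prodGraph_adj Hs x y).mpr ⟨i, hc⟩)
  calc ∑ x : Fin n → Fin ℓ, ∑ y : Fin n → Fin ℓ, (if (prodGraph Hs).Adj x y then F x y else 0)
      = ∑ x : Fin n → Fin ℓ, ∑ y : Fin n → Fin ℓ, ∑ i : Fin n,
          (if ((Hs i).Adj (x i) (y i) ∧ ∀ j, j ≠ i → x j = y j) then F x y else 0) :=
        Finset.sum_congr rfl fun x _ => Finset.sum_congr rfl fun y _ => step1 x y
    _ = ∑ x : Fin n → Fin ℓ, ∑ i : Fin n, ∑ y : Fin n → Fin ℓ,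
          (if ((Hs i).Adj (x i) (y i) ∧ ∀ j, j ≠ i → x j = y j) then F x y else 0) :=
        Finset.sum_congr rfl fun x _ => Finset.sum_comm
    _ = ∑ i : Fin n, ∑ x : Fin n → Fin ℓ, ∑ y : Fin n → Fin ℓ,
          (if ((Hs i).Adj (x i) (y i) ∧ ∀ j, j ≠ i → x j = y j) then F x y else 0) :=
        Finset.sum_comm
    _ = _ := Finset.sum_congr rfl fun i _ => ?_
  -- now fix i
  have hcollapse : ∀ (a b : Fin ℓ) (z : {j : Fin n // j ≠ i} → Fin ℓ),
      ∑ w : {j : Fin n // j ≠ i} → Fin ℓ,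
        (if ((Hs i).Adj ((emb i z a) i) ((emb i w b) i) ∧
            ∀ j, j ≠ i → emb i z a j = emb i w b j)
          then F (emb i z a) (emb i w b) else 0)
      = (if (Hs i).Adj a b then F (emb i z a) (emb i z b) else 0) := by
    intro a b z
    have hc : ∀ w : {j : Fin n // j ≠ i} → Fin ℓ,
        ((Hs i).Adj ((emb i z a) i) ((emb i w b) i) ∧
          ∀ j, j ≠ i → emb i z a j = emb i w b j)
        ↔ ((Hs i).Adj a b ∧ z = w) := by
      intro w
      rw [emb_apply_same, emb_apply_same]
      constructor
      · rintro ⟨hadj, hoff⟩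
        refine ⟨hadj, funext fun j => ?_⟩
        rw [← emb_apply_ne i z a j.2, ← emb_apply_ne i w b j.2]
        exact hoff j.1 j.2
      · rintro ⟨hadj, rfl⟩
        refine ⟨hadj, fun j hj => ?_⟩
        rw [emb_apply_ne i z a hj, emb_apply_ne i z b hj]
    simp_rw [hc]
    by_cases hP : (Hs i).Adj a b
    · simp only [hP, true_and, if_pos]
      rw [Finset.sum_ite_eq]
      simp
    · simp [hP]
  calc ∑ x : Fin n → Fin ℓ, ∑ y : Fin n → Fin ℓ,
        (if ((Hs i).Adj (x i) (y i) ∧ ∀ j, j ≠ i → x j = y j) then F x y else 0)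
      = ∑ p : Fin ℓ × ({j : Fin n // j ≠ i} → Fin ℓ), ∑ y : Fin n → Fin ℓ,
          (if ((Hs i).Adj (((Equiv.funSplitAt i (Fin ℓ)).symm p) i) (y i) ∧
              ∀ j, j ≠ i → ((Equiv.funSplitAt i (Fin ℓ)).symm p) j = y j)
            then F ((Equiv.funSplitAt i (Fin ℓ)).symm p) y else 0) :=
        (Equiv.sum_comp (Equiv.funSplitAt i (Fin ℓ)).symm _).symm
    _ = ∑ a : Fin ℓ, ∑ z : {j : Fin n // j ≠ i} → Fin ℓ, ∑ y : Fin n → Fin ℓ,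
          (if ((Hs i).Adj ((emb i z a) i) (y i) ∧ ∀ j, j ≠ i → emb i z a j = y j)
            then F (emb i z a) y else 0) := by
        rw [Fintype.sum_prod_type]
        rfl
    _ = ∑ a : Fin ℓ, ∑ z : {j : Fin n // j ≠ i} → Fin ℓ,
          ∑ q : Fin ℓ × ({j : Fin n // j ≠ i} → Fin ℓ),
          (if ((Hs i).Adj ((emb i z a) i) (((Equiv.funSplitAt i (Fin ℓ)).symm q) i) ∧
              ∀ j, j ≠ i → emb i z a j = ((Equiv.funSplitAt i (Fin ℓ)).symm q) j)
            then F (emb i z a) ((Equiv.funSplitAt i (Fin ℓ)).symm q) else 0) :=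
        Finset.sum_congr rfl fun a _ => Finset.sum_congr rfl fun z _ =>
          (Equiv.sum_comp (Equiv.funSplitAt i (Fin ℓ)).symm _).symm
    _ = ∑ a : Fin ℓ, ∑ z : {j : Fin n // j ≠ i} → Fin ℓ, ∑ b : Fin ℓ,
          ∑ w : {j : Fin n // j ≠ i} → Fin ℓ,
          (if ((Hs i).Adj ((emb i z a) i) ((emb i w b) i) ∧
              ∀ j, j ≠ i → emb i z a j = emb i w b j)
            then F (emb i z a) (emb i w b) else 0) :=
        Finset.sum_congr rfl fun a _ => Finset.sum_congr rfl fun z _ => by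
          rw [Fintype.sum_prod_type]
          rfl
    _ = ∑ a : Fin ℓ, ∑ z : {j : Fin n // j ≠ i} → Fin ℓ, ∑ b : Fin ℓ,
          (if (Hs i).Adj a b then F (emb i z a) (emb i z b) else 0) := by
        refine Finset.sum_congr rfl fun a _ => Finset.sum_congr rfl fun z _ =>
          Finset.sum_congr rfl fun b _ => ?_
        exact hcollapse a b z
    _ = ∑ z : {j : Fin n // j ≠ i} → Fin ℓ, ∑ a : Fin ℓ, ∑ b : Fin ℓ,
          (if (Hs i).Adj a b then F (emb i z a) (emb i z b) else 0) := Finset.sum_comm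

end Main
open scoped Classical in
lemma ipForm_eq {V : Type} [Fintype V] [DecidableEq V] (G : SimpleGraph V)
    (f : Equiv.Perm V → ℝ) :
    ipForm G f = (1 / (4 * (Nat.factorial (Fintype.card V) : ℝ))) *
      ∑ x : V, ∑ y : V, (if G.Adj x y then Dform f (Equiv.swap x y) else 0) := by
  rw [ipForm]
  congr 1
  rw [Finset.sum_comm]
  refine Finset.sum_congr rfl fun x _ => ?_
  rw [Finset.sum_comm]
  refine Finset.sum_congr rfl fun y _ => ?_
  by_cases h : G.Adj x y
  · simp only [h, if_true]
    rfl
  · simp only [h, if_false, Finset.sum_const_zero]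

theorem stmt8 (ℓ : ℕ) (hℓ : 2 ≤ ℓ) (n : ℕ) (hn : 1 ≤ n)
    (Gs : Fin n → SimpleGraph (Fin ℓ)) (hconn : (prodGraph Gs).Connected) :
    ∀ f : Equiv.Perm (Fin n → Fin ℓ) → ℝ,
      ipForm (hammingGraph ℓ n) f ≤ (ℓ : ℝ) ^ 3 * ipForm (prodGraph Gs) f := by
  classical
  intro f
  rw [ipForm_eq, ipForm_eq]
  set c : ℝ := 1 / (4 * (Nat.factorial (Fintype.card (Fin n → Fin ℓ)) : ℝ)) with hc
  have hcnn : 0 ≤ c := by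
    rw [hc]
    positivity
  have hmain :
      (∑ x : Fin n → Fin ℓ, ∑ y : Fin n → Fin ℓ,
        (if (hammingGraph ℓ n).Adj x y then Dform f (Equiv.swap x y) else 0))
      ≤ (ℓ : ℝ) ^ 3 * ∑ x : Fin n → Fin ℓ, ∑ y : Fin n → Fin ℓ,
        (if (prodGraph Gs).Adj x y then Dform f (Equiv.swap x y) else 0) := by
    rw [hammingGraph, decomp, decomp, Finset.mul_sum]
    refine Finset.sum_le_sum fun i _ => ?_
    rw [Finset.mul_sum]
    refine Finset.sum_le_sum fun z _ => ?_
    have h1 := oneDim (Gs i) (factor_connected Gs hconn i) (emb i z) (emb_inj i z) f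
    rw [Fintype.card_fin] at h1
    simpa only [SimpleGraph.top_adj] using h1
  calc c * (∑ x : Fin n → Fin ℓ, ∑ y : Fin n → Fin ℓ,
        (if (hammingGraph ℓ n).Adj x y then Dform f (Equiv.swap x y) else 0))
      ≤ c * ((ℓ : ℝ) ^ 3 * ∑ x : Fin n → Fin ℓ, ∑ y : Fin n → Fin ℓ,
        (if (prodGraph Gs).Adj x y then Dform f (Equiv.swap x y) else 0)) :=
        mul_le_mul_of_nonneg_left hmain hcnn
    _ = _ := by ring
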